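/- Suppose s : Z² → R^{4,1} has a Moutard lift: there is ν : Z² → R \ {0} with μ = s/ν satisfying the discrete Moutard equation δμ_{ik} ∧ δμ_{jl} = 0 on every elementary quadrilateral, and define s* by the discrete Christoffel formula ds*_{ij} = (1/(ν_i ν_j)) ds_{ij}. If s* is well defined (the 1-form ω_{ij} = ds_{ij}/(ν_i ν_j) is closed around each quadrilateral), then on every elementary quadrilateral A(s, s*) = 0, i.e., s* is Königs dual to s. -/

import Mathlib

/-- The wedge product `v ∧ w`, valued in the exterior algebra `Λ V`. -/
noncomputable def wedge {V : Type*} [AddCommGroup V] [Module ℝ V] (v w : V) :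
    ExteriorAlgebra ℝ V :=
  ExteriorAlgebra.ι ℝ v * ExteriorAlgebra.ι ℝ w

/-- The mixed area of two nets on the elementary quadrilateral with lower-left
vertex `p`. -/
noncomputable def MA {V : Type*} [AddCommGroup V] [Module ℝ V]
    (f g : ℤ × ℤ → V) (p : ℤ × ℤ) : ExteriorAlgebra ℝ V :=
  (4 : ℝ)⁻¹ • (wedge (f (p.1 + 1, p.2 + 1) - f p) (g (p.1, p.2 + 1) - g (p.1 + 1, p.2)) +
    wedge (g (p.1 + 1, p.2 + 1) - g p) (f (p.1, p.2 + 1) - f (p.1 + 1, p.2)))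

/-- Two points of `ℤ²` are joined by an edge if they differ by a standard basis
vector. -/
def IsEdge (p p' : ℤ × ℤ) : Prop :=
  p' = (p.1 + 1, p.2) ∨ p' = (p.1, p.2 + 1)

/-! On a quadrilateral `(ijkl)` let `D = ω_ij + ω_jk - ω_il - ω_lk` be the defect of closedness
of `ω_ij = ds_ij / (ν_i ν_j)`. Expanding in the exterior algebra gives the identity
`ν_j • (δs_ik ∧ δs*_jl + δs*_ik ∧ δs_jl) = (ν_j + ν_l) • (δμ_ik ∧ δμ_jl) + D ∧ (ν_l s_j + ν_j s_k)`,
valid for arbitrary vectors as soon as `ν_j, ν_l ≠ 0`. The Moutard equation kills the first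
term and closedness the second. -/

section Wedge

variable {V : Type*} [AddCommGroup V] [Module ℝ V]

@[simp] lemma wedge_add_left (x y z : V) : wedge (x + y) z = wedge x z + wedge y z := by
  simp [wedge, add_mul]

@[simp] lemma wedge_add_right (x y z : V) : wedge x (y + z) = wedge x y + wedge x z := by
  simp [wedge, mul_add]

@[simp] lemma wedge_sub_left (x y z : V) : wedge (x - y) z = wedge x z - wedge y z := by
  simp [wedge, sub_mul]

@[simp] lemma wedge_sub_right (x y z : V) : wedge x (y - z) = wedge x y - wedge x z := by
  simp [wedge, mul_sub]

@[simp] lemma wedge_smul_left (r : ℝ) (x y : V) : wedge (r • x) y = r • wedge x y := by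
  simp [wedge]

@[simp] lemma wedge_smul_right (r : ℝ) (x y : V) : wedge x (r • y) = r • wedge x y := by
  simp [wedge]

@[simp] lemma wedge_self (x : V) : wedge x x = 0 := ExteriorAlgebra.ι_sq_zero x

@[simp] lemma wedge_zero_left (y : V) : wedge 0 y = 0 := by simp [wedge]

lemma wedge_comm (x y : V) : wedge y x = -wedge x y :=
  eq_neg_of_add_eq_zero_left (ExteriorAlgebra.ι_add_mul_swap y x)

lemma moutard_christoffel_identity (a b c d : V) {α β γ δ : ℝ} (hβ : β ≠ 0) (hδ : δ ≠ 0) :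
    β • (wedge (c - a) ((α * δ)⁻¹ • (d - a) - (α * β)⁻¹ • (b - a)) +
        wedge ((α * β)⁻¹ • (b - a) + (β * γ)⁻¹ • (c - b)) (d - b)) =
      (β + δ) • wedge (γ⁻¹ • c - α⁻¹ • a) (δ⁻¹ • d - β⁻¹ • b) +
        wedge ((α * β)⁻¹ • (b - a) + (β * γ)⁻¹ • (c - b) -
            (α * δ)⁻¹ • (d - a) - (δ * γ)⁻¹ • (c - d))
          (δ • b + β • c) := by
  simp only [wedge_sub_left, wedge_sub_right, wedge_add_left, wedge_add_right,
    wedge_smul_left, wedge_smul_right, wedge_self]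
  simp only [wedge_comm a c, wedge_comm b c, wedge_comm b d, wedge_comm c d]
  match_scalars <;> field_simp <;> ring

/-- `a, b, c, d` stand for `s_i, s_j, s_k, s_l` and the primed vectors for the values of `s*`. -/
lemma wedge_diagonals_add_eq_zero_of_moutard {a b c d a' b' c' d' : V} {α β γ δ : ℝ}
    (hβ : β ≠ 0) (hδ : δ ≠ 0)
    (hMoutard : wedge (γ⁻¹ • c - α⁻¹ • a) (δ⁻¹ • d - β⁻¹ • b) = 0)
    (hab : b' - a' = (α * β)⁻¹ • (b - a)) (hbc : c' - b' = (β * γ)⁻¹ • (c - b))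
    (had : d' - a' = (α * δ)⁻¹ • (d - a)) (hdc : c' - d' = (δ * γ)⁻¹ • (c - d)) :
    wedge (c - a) (d' - b') + wedge (c' - a') (d - b) = 0 := by
  have hclosed : (α * β)⁻¹ • (b - a) + (β * γ)⁻¹ • (c - b) -
      (α * δ)⁻¹ • (d - a) - (δ * γ)⁻¹ • (c - d) = 0 := by
    rw [← hab, ← hbc, ← had, ← hdc]; abel
  have hdiag : d' - b' = (α * δ)⁻¹ • (d - a) - (α * β)⁻¹ • (b - a) := by
    rw [← had, ← hab]; abel
  have hdiag' : c' - a' = (α * β)⁻¹ • (b - a) + (β * γ)⁻¹ • (c - b) := by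
    rw [← hab, ← hbc]; abel
  have h := moutard_christoffel_identity a b c d (α := α) (γ := γ) hβ hδ
  rw [hMoutard, hclosed, ← hdiag, ← hdiag', smul_zero, wedge_zero_left, add_zero] at h
  exact (smul_eq_zero.mp h).resolve_left hβ

end Wedge

/-- If `s` admits a Moutard lift `μ = s/ν` and `s*` is defined by the discrete
Christoffel formula `ds* = ds/(ν_i ν_j)`, then `A(s, s*) = 0` on every
elementary quadrilateral: `s*` is Königs dual to `s`. -/
theorem stmt19 {V : Type*} [AddCommGroup V] [Module ℝ V]
    (s s' : ℤ × ℤ → V) (ν : ℤ × ℤ → ℝ) (hν : ∀ p, ν p ≠ 0)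
    (hMoutard : ∀ p : ℤ × ℤ,
      wedge ((ν (p.1 + 1, p.2 + 1))⁻¹ • s (p.1 + 1, p.2 + 1) - (ν p)⁻¹ • s p)
        ((ν (p.1, p.2 + 1))⁻¹ • s (p.1, p.2 + 1) -
          (ν (p.1 + 1, p.2))⁻¹ • s (p.1 + 1, p.2)) = 0)
    (hChristoffel : ∀ p p', IsEdge p p' →
      s' p' - s' p = (ν p * ν p')⁻¹ • (s p' - s p)) :
    ∀ p, MA s s' p = 0 := by
  intro p
  rw [MA, wedge_diagonals_add_eq_zero_of_moutard (hν _) (hν _) (hMoutard p)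
    (hChristoffel _ _ (Or.inl rfl)) (hChristoffel _ _ (Or.inr rfl))
    (hChristoffel _ _ (Or.inr rfl)) (hChristoffel _ _ (Or.inl rfl)), smul_zero]
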